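/- arXiv:2401.16275 — 2 statements merged into one kernel-verified Lean document; each statement's English description precedes it below -/
import Mathlib

section
/- If $\psi : [0,\infty) \to [0,\infty)$ is a nontrivial sub-root function (nonnegative, nondecreasing, with $r \mapsto \psi(r)/\sqrt{r}$ nonincreasing for $r>0$, and $\psi$ is not identically zero), then the equation $\psi(r) = r$ has a unique positive solution. -/
/-!
Write `φ r = ψ r / √r`, which is nonincreasing. A positive fixed point of `ψ` is exactly a point where
`φ r = √r`; as `√r` is strictly increasing there is at most one. For existence, comparing with
`ψ 1 > 0` gives `a ≤ ψ a` for `a = min 1 (ψ 1)²` and `ψ b ≤ b` for `b = max 1 (ψ 1)²`, so the monotone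
map `ψ` sends `[a, b]` into itself and has a fixed point there (Knaster–Tarski, via a supremum).
-/

def SubRoot (ψ : ℝ → ℝ) : Prop :=
  (∀ r, 0 ≤ r → 0 ≤ ψ r) ∧
  (∀ r s, 0 ≤ r → r ≤ s → ψ r ≤ ψ s) ∧
  (∀ r s, 0 < r → r ≤ s → ψ s / Real.sqrt s ≤ ψ r / Real.sqrt r)

open Set

theorem MonotoneOn.exists_fixed_mem_Icc {α : Type*} [ConditionallyCompleteLattice α] {f : α → α}
    {a b : α} (hf : MonotoneOn f (Icc a b)) (hab : a ≤ b) (ha : a ≤ f a) (hb : f b ≤ b) :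
    ∃ x ∈ Icc a b, f x = x := by
  set S := {x ∈ Icc a b | x ≤ f x}
  have haS : a ∈ S := ⟨left_mem_Icc.2 hab, ha⟩
  have hbdd : BddAbove S := ⟨b, fun x hx => hx.1.2⟩
  set R := sSup S
  have hR : R ∈ Icc a b := ⟨le_csSup hbdd haS, csSup_le ⟨a, haS⟩ fun x hx => hx.1.2⟩
  have hR_le : R ≤ f R := csSup_le ⟨a, haS⟩ fun x hx =>
    hx.2.trans (hf hx.1 hR (le_csSup hbdd hx))
  have hfR : f R ∈ Icc a b := ⟨hR.1.trans hR_le, (hf hR (right_mem_Icc.2 hab) hR.2).trans hb⟩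
  have hfR_mem : f R ∈ S := ⟨hfR, hf hR hfR hR_le⟩
  exact ⟨R, hR, (le_csSup hbdd hfR_mem).antisymm hR_le⟩

namespace SubRoot

variable {ψ : ℝ → ℝ}

theorem monotoneOn (h : SubRoot ψ) : MonotoneOn ψ (Ici 0) :=
  fun r hr _ _ hrs => h.2.1 r _ hr hrs

theorem pos (h : SubRoot ψ) (hnt : ∃ r, 0 ≤ r ∧ ψ r ≠ 0) {r : ℝ} (hr : 0 < r) : 0 < ψ r := by
  obtain ⟨r₀, hr₀, hψr₀⟩ := hnt
  have hψr₀_pos : 0 < ψ r₀ := (h.1 r₀ hr₀).lt_of_ne' hψr₀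
  rcases le_total r₀ r with hle | hle
  · exact hψr₀_pos.trans_le (h.2.1 r₀ r hr₀ hle)
  · have hratio : 0 < ψ r / √r :=
      (div_pos hψr₀_pos (Real.sqrt_pos.2 (hr.trans_le hle))).trans_le (h.2.2 r r₀ hr hle)
    exact (div_pos_iff_of_pos_right (Real.sqrt_pos.2 hr)).1 hratio

theorem mul_sqrt_le_mul_sqrt (h : SubRoot ψ) {r s : ℝ} (hr : 0 < r) (hrs : r ≤ s) :
    ψ s * √r ≤ ψ r * √s := by
  have hs : 0 < s := hr.trans_le hrs
  have := h.2.2 r s hr hrs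
  rwa [div_le_div_iff₀ (Real.sqrt_pos.2 hs) (Real.sqrt_pos.2 hr)] at this

theorem le_apply_of_sqrt_le (h : SubRoot ψ) {r : ℝ} (hr : 0 < r) (hr1 : r ≤ 1) (hsqrt : √r ≤ ψ 1) :
    r ≤ ψ r := by
  have := h.mul_sqrt_le_mul_sqrt hr hr1
  rw [Real.sqrt_one, mul_one] at this
  calc r = √r * √r := (Real.mul_self_sqrt hr.le).symm
    _ ≤ ψ 1 * √r := by gcongr
    _ ≤ ψ r := this

theorem apply_le_of_le_sqrt (h : SubRoot ψ) {r : ℝ} (hr1 : 1 ≤ r) (hsqrt : ψ 1 ≤ √r) :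
    ψ r ≤ r := by
  have := h.mul_sqrt_le_mul_sqrt one_pos hr1
  rw [Real.sqrt_one, mul_one] at this
  calc ψ r ≤ ψ 1 * √r := this
    _ ≤ √r * √r := by gcongr
    _ = r := Real.mul_self_sqrt (zero_le_one.trans hr1)

theorem le_of_apply_eq_self (h : SubRoot ψ) {u v : ℝ} (hu : 0 < u) (huv : u ≤ v) (hψu : ψ u = u)
    (hψv : ψ v = v) : v ≤ u := by
  have := h.2.2 u v hu huv
  rw [hψu, hψv, Real.div_sqrt, Real.div_sqrt] at this
  exact (Real.sqrt_le_sqrt_iff hu.le).1 this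

end SubRoot

/-- A nontrivial sub-root function has a unique positive fixed point. -/
theorem subroot_unique_fixed_point (ψ : ℝ → ℝ) (h : SubRoot ψ)
    (hnt : ∃ r, 0 ≤ r ∧ ψ r ≠ 0) :
    ∃! r : ℝ, 0 < r ∧ ψ r = r := by
  have h1 : 0 < ψ 1 := h.pos hnt one_pos
  set a := min 1 (ψ 1 ^ 2)
  set b := max 1 (ψ 1 ^ 2)
  have ha : 0 < a := lt_min one_pos (by positivity)
  have hab : a ≤ b := min_le_max
  have hψa : a ≤ ψ a := h.le_apply_of_sqrt_le ha (min_le_left _ _)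
    ((Real.sqrt_le_left h1.le).2 (min_le_right _ _))
  have hψb : ψ b ≤ b := h.apply_le_of_le_sqrt (le_max_left _ _)
    (Real.le_sqrt_of_sq_le (le_max_right _ _))
  obtain ⟨R, hR, hψR⟩ :=
    (h.monotoneOn.mono (Icc_subset_Ici_self.trans (Ici_subset_Ici.2 ha.le))).exists_fixed_mem_Icc
      hab hψa hψb
  have hR0 : 0 < R := ha.trans_le hR.1
  refine ⟨R, ⟨hR0, hψR⟩, fun y ⟨hy0, hψy⟩ => ?_⟩
  rcases le_total y R with hyR | hRy
  · exact hyR.antisymm (h.le_of_apply_eq_self hy0 hyR hψy hψR)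
  · exact (h.le_of_apply_eq_self hR0 hRy hψR hψy).antisymm hRy
end

section
/- Let $\psi$ be a nontrivial sub-root function with fixed point $r^*$. Then for every $r > 0$: $r \ge \psi(r)$ if and only if $r \ge r^*$. -/
open Real Set

theorem div_sqrt_le_sqrt_iff {x y : ℝ} (hx : 0 < x) : y / √x ≤ √x ↔ y ≤ x := by
  rw [div_le_iff₀ (sqrt_pos.mpr hx), mul_self_sqrt hx.le]

theorem SubRoot.antitoneOn_div_sqrt {ψ : ℝ → ℝ} (h : SubRoot ψ) :
    AntitoneOn (fun r ↦ ψ r / √r) (Ioi 0) :=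
  fun r hr s _ hrs ↦ h.2.2 r s hr hrs

theorem le_self_iff_le_of_antitoneOn_div_sqrt {ψ : ℝ → ℝ}
    (hψ : AntitoneOn (fun r ↦ ψ r / √r) (Ioi 0)) {r₀ : ℝ} (h₀ : 0 < r₀) (hfix : ψ r₀ = r₀)
    {r : ℝ} (hr : 0 < r) : ψ r ≤ r ↔ r₀ ≤ r := by
  have hfix' : ψ r₀ / √r₀ = √r₀ := by rw [hfix, div_sqrt]
  rw [← div_sqrt_le_sqrt_iff hr]
  constructor
  · intro hle
    by_contra! hlt
    have hψr : ψ r₀ / √r₀ ≤ ψ r / √r := hψ hr h₀ hlt.le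
    have hsqrt : √r < √r₀ := sqrt_lt_sqrt hr.le hlt
    linarith
  · intro hge
    calc ψ r / √r ≤ ψ r₀ / √r₀ := hψ h₀ hr hge
      _ = √r₀ := hfix'
      _ ≤ √r := sqrt_le_sqrt hge

theorem subroot_fixed_point_characterization_general (ψ : ℝ → ℝ) (h : SubRoot ψ)
    (rstar : ℝ) (hpos : 0 < rstar) (hfix : ψ rstar = rstar) :
    ∀ r : ℝ, 0 < r → (ψ r ≤ r ↔ rstar ≤ r) :=
  fun _ hr ↦ le_self_iff_le_of_antitoneOn_div_sqrt h.antitoneOn_div_sqrt hpos hfix hr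

/-- For a nontrivial sub-root function `ψ` with (unique positive) fixed point `r*`,
for every `r > 0` we have `ψ r ≤ r ↔ r* ≤ r`. -/
theorem subroot_fixed_point_characterization (ψ : ℝ → ℝ) (h : SubRoot ψ)
    (rstar : ℝ) (hpos : 0 < rstar) (hfix : ψ rstar = rstar)
    (huniq : ∀ r, 0 < r → ψ r = r → r = rstar) :
    ∀ r : ℝ, 0 < r → (ψ r ≤ r ↔ rstar ≤ r) :=
  subroot_fixed_point_characterization_general ψ h rstar hpos hfix
end
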